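/- Let δ ≥ 2 and p^{(Y)}(t, x, y) be the transition density of the diffusion dY_t = −√(1 − Y_t²) dB_t − (δ/2) Y_t dt given by the Gegenbauer eigenfunction expansion. Then there is a constant C depending only on δ such that |p^{(Y)}(t, x, y) − p^{(Y)}(y)| ≤ C e^{−(δ/2) t} for all x, y ∈ [−1, 1] and t ≥ 1, where p^{(Y)}(y) = (1 − y²)^{δ/2 − 1} / ∫_{−1}^1 (1 − s²)^{δ/2 − 1} ds is the stationary density. -/

import Mathlib

open Filter Set Topology Polynomial

noncomputable section

/-- The Gegenbauer (ultraspherical) polynomial `C_n^{(α)}`, defined by the standard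
recurrence `C_0 = 1`, `C_1 = 2αx`, `n C_n = 2x(n + α − 1) C_{n−1} − (n + 2α − 2) C_{n−2}`. -/
def gegenbauer (α : ℝ) : ℕ → Polynomial ℝ
  | 0 => 1
  | 1 => Polynomial.C (2 * α) * Polynomial.X
  | n + 2 =>
      Polynomial.C (2 * ((n : ℝ) + 1 + α) / ((n : ℝ) + 2)) * Polynomial.X
          * gegenbauer α (n + 1)
        - Polynomial.C (((n : ℝ) + 2 * α) / ((n : ℝ) + 2)) * gegenbauer α n

/-- The transition density `p^{(Y)}(t, x, y)` of the diffusion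
`dY_t = −√(1 − Y_t²) dB_t − (δ/2) Y_t dt`, given by its Gegenbauer eigenfunction
expansion. -/
def transDensity (δ t x y : ℝ) : ℝ :=
  ∑' n : ℕ,
    (1 - y ^ 2) ^ (δ / 2 - 1)
      * (gegenbauer (δ / 2 - 1 / 2) n).eval x
      * (gegenbauer (δ / 2 - 1 / 2) n).eval y
      / (∫ s in (-1 : ℝ)..1,
          (1 - s ^ 2) ^ (δ / 2 - 1) * ((gegenbauer (δ / 2 - 1 / 2) n).eval s) ^ 2)
      * Real.exp (-((n : ℝ) / 2) * ((n : ℝ) + δ - 1) * t)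

/-- The stationary density `p^{(Y)}(y) = (1 − y²)^{δ/2 − 1} / ∫_{−1}^1 (1 − s²)^{δ/2 − 1} ds`. -/
def stationaryDensity (δ y : ℝ) : ℝ :=
  (1 - y ^ 2) ^ (δ / 2 - 1) / ∫ s in (-1 : ℝ)..1, (1 - s ^ 2) ^ (δ / 2 - 1)

/-! Removing the `n = 0` mode, which is the stationary density, leaves modes decaying like
`e^{-λₙ t}` with `λₙ = n(n + δ - 1)/2 ≥ λ₁ = δ/2`. The three-term recurrence bounds `Cₙ` and `Cₙ'`
by `(δ + 4)ⁿ` on `[-1, 1]`; since `Cₙ(1) ≥ 1`, `Cₙ` stays above `1/2` on an interval of length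
`≍ (δ + 4)⁻ⁿ` near `1`, so the weighted norms are at least exponentially small in `n`. The
coefficients of the expansion therefore grow at most geometrically, which the Gaussian factor
`e^{-λₙ}` absorbs, and for `t ≥ 1` the tail is `O(e^{-(δ/2) t})`. -/

section SpectralGap

variable {f c lam : ℕ → ℝ} {gap t : ℝ}

lemma exp_neg_mul_le_of_le (ht : 1 ≤ t) {l : ℝ} (hl : gap ≤ l) :
    Real.exp (-l * t) ≤ Real.exp gap * Real.exp (-gap * t) * Real.exp (-l) := by
  rw [← Real.exp_add, ← Real.exp_add]
  exact Real.exp_le_exp.2 (by nlinarith)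

lemma abs_le_of_abs_le_mul_exp (ht : 1 ≤ t) (hgap : ∀ n, gap ≤ lam n)
    (hf : ∀ n, |f n| ≤ c n * Real.exp (-lam n * t)) (n : ℕ) :
    |f n| ≤ Real.exp gap * Real.exp (-gap * t) * (c n * Real.exp (-lam n)) := by
  have hc : 0 ≤ c n :=
    nonneg_of_mul_nonneg_left ((abs_nonneg _).trans (hf n)) (Real.exp_pos _)
  calc |f n| ≤ c n * Real.exp (-lam n * t) := hf n
    _ ≤ c n * (Real.exp gap * Real.exp (-gap * t) * Real.exp (-lam n)) :=
      mul_le_mul_of_nonneg_left (exp_neg_mul_le_of_le ht (hgap n)) hc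
    _ = _ := by ring

lemma summable_of_abs_le_mul_exp (ht : 1 ≤ t) (hgap : ∀ n, gap ≤ lam n)
    (hc : Summable fun n => c n * Real.exp (-lam n))
    (hf : ∀ n, |f n| ≤ c n * Real.exp (-lam n * t)) : Summable f :=
  (hc.mul_left _).of_norm_bounded (abs_le_of_abs_le_mul_exp ht hgap hf)

lemma abs_tsum_le_of_abs_le_mul_exp (ht : 1 ≤ t) (hgap : ∀ n, gap ≤ lam n)
    (hc : Summable fun n => c n * Real.exp (-lam n))
    (hf : ∀ n, |f n| ≤ c n * Real.exp (-lam n * t)) :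
    |∑' n, f n| ≤ Real.exp gap * (∑' n, c n * Real.exp (-lam n)) * Real.exp (-gap * t) := by
  have hbound := abs_le_of_abs_le_mul_exp ht hgap hf
  have hf_abs : Summable fun n => |f n| :=
    (hc.mul_left _).of_nonneg_of_le (fun n => abs_nonneg _) hbound
  have habs_tsum : ‖∑' n, f n‖ ≤ ∑' n, ‖f n‖ := norm_tsum_le_tsum_norm hf_abs
  simp only [Real.norm_eq_abs] at habs_tsum
  calc |∑' n, f n| ≤ ∑' n, |f n| := habs_tsum
    _ ≤ ∑' n, Real.exp gap * Real.exp (-gap * t) * (c n * Real.exp (-lam n)) :=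
      hf_abs.tsum_le_tsum hbound (hc.mul_left _)
    _ = _ := by rw [tsum_mul_left]; ring

end SpectralGap

section ThreeTerm

variable {p q : ℝ[X]} {a b A B L x : ℝ} {k : ℕ}

lemma abs_eval_three_term_le (hA : |a| ≤ A) (hB : |b| ≤ B) (hL : 0 ≤ L)
    (hAL : 2 * A * L + B ≤ L ^ 2) (hx : |x| ≤ 1)
    (hp : |p.eval x| ≤ L ^ (k + 1)) (hp' : |p.derivative.eval x| ≤ L ^ (k + 1))
    (hq : |q.eval x| ≤ L ^ k) (hq' : |q.derivative.eval x| ≤ L ^ k) :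
    |(C a * X * p - C b * q).eval x| ≤ L ^ (k + 2) ∧
      |(C a * X * p - C b * q).derivative.eval x| ≤ L ^ (k + 2) := by
  have hA0 : 0 ≤ A := (abs_nonneg a).trans hA
  have hB0 : 0 ≤ B := (abs_nonneg b).trans hB
  have hLk : 0 ≤ L ^ k := pow_nonneg hL k
  have hfinal : (2 * A * L + B) * L ^ k ≤ L ^ (k + 2) := by
    rw [pow_add, mul_comm (L ^ k)]; exact mul_le_mul_of_nonneg_right hAL hLk
  have hxp : |x * p.eval x| ≤ L ^ (k + 1) := by
    rw [abs_mul]; exact (mul_le_mul hx hp (abs_nonneg _) zero_le_one).trans_eq (one_mul _)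
  have hxp' : |p.eval x + x * p.derivative.eval x| ≤ 2 * L ^ (k + 1) := by
    have : |x * p.derivative.eval x| ≤ L ^ (k + 1) := by
      rw [abs_mul]; exact (mul_le_mul hx hp' (abs_nonneg _) zero_le_one).trans_eq (one_mul _)
    linarith [abs_add_le (p.eval x) (x * p.derivative.eval x)]
  constructor
  · calc |(C a * X * p - C b * q).eval x| = |a * (x * p.eval x) - b * q.eval x| := by
          simp only [eval_sub, eval_mul, eval_C, eval_X, mul_assoc]
      _ ≤ |a| * |x * p.eval x| + |b| * |q.eval x| := by
          rw [← abs_mul, ← abs_mul]; exact abs_sub _ _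
      _ ≤ A * L ^ (k + 1) + B * L ^ k := by gcongr
      _ ≤ (2 * A * L + B) * L ^ k := by
          rw [pow_succ]; nlinarith [mul_nonneg (mul_nonneg hA0 hL) hLk]
      _ ≤ L ^ (k + 2) := hfinal
  · calc |(C a * X * p - C b * q).derivative.eval x|
          = |a * (p.eval x + x * p.derivative.eval x) - b * q.derivative.eval x| := by
          simp only [derivative_sub, derivative_mul, derivative_C, derivative_X, eval_sub,
            eval_add, eval_mul, eval_C, eval_X, eval_zero, eval_one]
          ring_nf
      _ ≤ |a| * |p.eval x + x * p.derivative.eval x| + |b| * |q.derivative.eval x| := by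
          rw [← abs_mul, ← abs_mul]; exact abs_sub _ _
      _ ≤ A * (2 * L ^ (k + 1)) + B * L ^ k := by gcongr
      _ = (2 * A * L + B) * L ^ k := by ring
      _ ≤ L ^ (k + 2) := hfinal

end ThreeTerm

section Gegenbauer

variable {α : ℝ}

lemma gegenbauer_eval_succ_succ (x : ℝ) (n : ℕ) :
    (gegenbauer α (n + 2)).eval x =
      2 * ((n : ℝ) + 1 + α) / ((n : ℝ) + 2) * x * (gegenbauer α (n + 1)).eval x
        - ((n : ℝ) + 2 * α) / ((n : ℝ) + 2) * (gegenbauer α n).eval x := by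
  simp [gegenbauer]

lemma gegenbauer_eval_one_le_succ (hα : 1 / 2 ≤ α) (n : ℕ) :
    (gegenbauer α n).eval 1 ≤ (gegenbauer α (n + 1)).eval 1 := by
  induction n with
  | zero =>
    simp only [gegenbauer, eval_one, eval_mul, eval_C, eval_X, mul_one]
    linarith
  | succ n ih =>
    have hincr : (gegenbauer α (n + 2)).eval 1 - (gegenbauer α (n + 1)).eval 1 =
        ((n : ℝ) + 2 * α) / ((n : ℝ) + 2) *
          ((gegenbauer α (n + 1)).eval 1 - (gegenbauer α n).eval 1) := by
      rw [gegenbauer_eval_succ_succ]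
      field_simp
      ring
    have : 0 ≤ ((n : ℝ) + 2 * α) / ((n : ℝ) + 2) := by positivity
    nlinarith

lemma one_le_gegenbauer_eval_one (hα : 1 / 2 ≤ α) (n : ℕ) : 1 ≤ (gegenbauer α n).eval 1 := by
  simpa [gegenbauer] using
    monotone_nat_of_le_succ (gegenbauer_eval_one_le_succ hα) (Nat.zero_le n)

lemma abs_gegenbauer_eval_le {x : ℝ} (hα : 0 ≤ α) (hx : |x| ≤ 1) (n : ℕ) :
    |(gegenbauer α n).eval x| ≤ (2 * α + 5) ^ n ∧
      |(gegenbauer α n).derivative.eval x| ≤ (2 * α + 5) ^ n := by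
  induction n using Nat.twoStepInduction with
  | zero => simp [gegenbauer]
  | one =>
    have h2α : |2 * α| ≤ 2 * α + 5 := by rw [abs_of_nonneg (by positivity)]; linarith
    refine ⟨?_, by simpa [gegenbauer] using h2α⟩
    simp only [gegenbauer, eval_mul, eval_C, eval_X, pow_one]
    rw [abs_mul]
    nlinarith [abs_nonneg (2 * α), abs_nonneg x]
  | more n ih₀ ih₁ =>
    have hn : (0 : ℝ) < n + 2 := by positivity
    rw [gegenbauer]
    refine abs_eval_three_term_le (A := 2 + α) (B := 1 + α) ?_ ?_ (by positivity) (by nlinarith)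
      hx ih₁.1 ih₁.2 ih₀.1 ih₀.2
    · rw [abs_of_nonneg (by positivity), div_le_iff₀ hn]; nlinarith
    · rw [abs_of_nonneg (by positivity), div_le_iff₀ hn]; nlinarith

end Gegenbauer

section WeightedNorm

variable {p : ℝ[X]} {M γ : ℝ}

lemma eval_one_sub_eval_le (hM : ∀ x ∈ Icc (-1 : ℝ) 1, |p.derivative.eval x| ≤ M) {s : ℝ}
    (hs : s ∈ Icc (-1 : ℝ) 1) : p.eval 1 - p.eval s ≤ M * (1 - s) := by
  have hmvt := norm_image_sub_le_of_norm_deriv_le_segment' (f := fun x => p.eval x)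
    (fun x _ => (p.hasDerivAt x).hasDerivWithinAt)
    (fun x hx => hM x ⟨hs.1.trans hx.1, hx.2.le⟩) 1 ⟨hs.2, le_rfl⟩
  exact (le_abs_self _).trans hmvt

/-- By the mean value theorem `p ≥ 1/2` on `[1 - 2e, 1 - e]` with `e = 1/(4M)`, where also
`1 - s² ≥ e`. -/
lemma inv_le_integral_weight_mul_sq (hγ : 0 ≤ γ) (hM1 : 1 ≤ M) (hp1 : 1 ≤ p.eval 1)
    (hM : ∀ x ∈ Icc (-1 : ℝ) 1, |p.derivative.eval x| ≤ M) :
    (4 * (4 * M) ^ (γ + 1))⁻¹ ≤ ∫ s in (-1 : ℝ)..1, (1 - s ^ 2) ^ γ * (p.eval s) ^ 2 := by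
  set e : ℝ := (4 * M)⁻¹ with he
  have he0 : 0 < e := by positivity
  have heM : M * e = 1 / 4 := by rw [he]; field_simp
  have he4 : e ≤ 1 / 4 := by nlinarith
  have hcont : Continuous fun s : ℝ => (1 - s ^ 2) ^ γ * (p.eval s) ^ 2 :=
    ((continuous_const.sub (continuous_pow 2)).rpow_const fun _ => Or.inr hγ).mul
      (p.continuous.pow 2)
  have hlow : ∀ s ∈ Icc (1 - 2 * e) (1 - e),
      e ^ γ * (1 / 4) ≤ (1 - s ^ 2) ^ γ * (p.eval s) ^ 2 := by
    intro s hs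
    have hps : 1 / 2 ≤ p.eval s := by
      have := eval_one_sub_eval_le hM (s := s) ⟨by linarith [hs.1], by linarith [hs.2]⟩
      nlinarith [hs.1]
    have hes : e ≤ 1 - s ^ 2 := by nlinarith [hs.1, hs.2]
    exact mul_le_mul (Real.rpow_le_rpow he0.le hes hγ) (by nlinarith) (by norm_num)
      (Real.rpow_nonneg (he0.le.trans hes) γ)
  calc (4 * (4 * M) ^ (γ + 1))⁻¹ = (1 - e - (1 - 2 * e)) * (e ^ γ * (1 / 4)) := by
        rw [he, Real.inv_rpow (by positivity), Real.rpow_add_one (by positivity)]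
        field_simp
        ring
    _ = ∫ s in (1 - 2 * e)..(1 - e), e ^ γ * (1 / 4) := by
        simp only [intervalIntegral.integral_const, smul_eq_mul]
    _ ≤ ∫ s in (1 - 2 * e)..(1 - e), (1 - s ^ 2) ^ γ * (p.eval s) ^ 2 :=
        intervalIntegral.integral_mono_on (by linarith) intervalIntegrable_const
          (hcont.intervalIntegrable _ _) hlow
    _ ≤ ∫ s in (-1 : ℝ)..1, (1 - s ^ 2) ^ γ * (p.eval s) ^ 2 := by
        refine intervalIntegral.integral_mono_interval (by linarith) (by linarith) (by linarith)
          ?_ (hcont.intervalIntegrable _ _)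
        refine MeasureTheory.ae_restrict_of_forall_mem measurableSet_Ioc fun s hs => ?_
        exact mul_nonneg (Real.rpow_nonneg (by nlinarith [hs.1, hs.2]) γ) (sq_nonneg _)

end WeightedNorm

def gegenbauerEigenvalue (δ : ℝ) (n : ℕ) : ℝ := n / 2 * (n + δ - 1)

lemma gegenbauerEigenvalue_one (δ : ℝ) : gegenbauerEigenvalue δ 1 = δ / 2 := by
  simp only [gegenbauerEigenvalue, Nat.cast_one]
  ring

lemma gegenbauerEigenvalue_nonneg {δ : ℝ} (hδ : 0 ≤ δ) (n : ℕ) : 0 ≤ gegenbauerEigenvalue δ n := by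
  unfold gegenbauerEigenvalue
  rcases n with _ | n
  · simp
  · push_cast; nlinarith

lemma gegenbauerEigenvalue_one_le {δ : ℝ} (hδ : -1 ≤ δ) (n : ℕ) :
    gegenbauerEigenvalue δ 1 ≤ gegenbauerEigenvalue δ (n + 1) := by
  unfold gegenbauerEigenvalue
  push_cast
  nlinarith [n.cast_nonneg (α := ℝ)]

lemma gegenbauerEigenvalue_succ (δ : ℝ) (n : ℕ) :
    gegenbauerEigenvalue δ (n + 1) = gegenbauerEigenvalue δ n + (n + δ / 2) := by
  unfold gegenbauerEigenvalue
  push_cast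
  ring

lemma summable_pow_mul_exp_neg_gegenbauerEigenvalue (δ r : ℝ) :
    Summable fun n => r ^ n * Real.exp (-gegenbauerEigenvalue δ n) := by
  have hratio : Tendsto (fun n : ℕ => |r| * Real.exp (-(n + δ / 2))) atTop (𝓝 0) := by
    have : Tendsto (fun n : ℕ => -((n : ℝ) + δ / 2)) atTop atBot :=
      tendsto_neg_atTop_atBot.comp (tendsto_atTop_add_const_right _ _ tendsto_natCast_atTop_atTop)
    simpa using (Real.tendsto_exp_atBot.comp this).const_mul |r|
  refine summable_of_ratio_norm_eventually_le (r := 1 / 2) (by norm_num) ?_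
  filter_upwards [hratio.eventually_le_const (by norm_num : (0 : ℝ) < 1 / 2)] with n hn
  have hsucc : r ^ (n + 1) * Real.exp (-gegenbauerEigenvalue δ (n + 1)) =
      (r ^ n * Real.exp (-gegenbauerEigenvalue δ n)) * (r * Real.exp (-(n + δ / 2))) := by
    rw [gegenbauerEigenvalue_succ, neg_add, Real.exp_add]; ring
  rw [hsucc, norm_mul, mul_comm (1 / 2)]
  refine mul_le_mul_of_nonneg_left ?_ (norm_nonneg _)
  rwa [Real.norm_eq_abs, abs_mul, Real.abs_exp]

def transDensityTerm (δ t x y : ℝ) (n : ℕ) : ℝ :=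
  (1 - y ^ 2) ^ (δ / 2 - 1)
    * (gegenbauer (δ / 2 - 1 / 2) n).eval x
    * (gegenbauer (δ / 2 - 1 / 2) n).eval y
    / (∫ s in (-1 : ℝ)..1,
        (1 - s ^ 2) ^ (δ / 2 - 1) * ((gegenbauer (δ / 2 - 1 / 2) n).eval s) ^ 2)
    * Real.exp (-((n : ℝ) / 2) * ((n : ℝ) + δ - 1) * t)

section TransDensity

variable {δ t x y : ℝ}

lemma transDensity_eq_tsum : transDensity δ t x y = ∑' n, transDensityTerm δ t x y n := rfl

lemma transDensityTerm_zero : transDensityTerm δ t x y 0 = stationaryDensity δ y := by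
  simp [transDensityTerm, stationaryDensity, gegenbauer]

lemma abs_transDensityTerm_le (hδ : 2 ≤ δ) (hx : x ∈ Icc (-1 : ℝ) 1) (hy : y ∈ Icc (-1 : ℝ) 1)
    (n : ℕ) :
    |transDensityTerm δ t x y n| ≤
      4 * 4 ^ (δ / 2) * ((δ + 4) ^ (δ / 2) * (δ + 4) ^ 2) ^ n *
        Real.exp (-gegenbauerEigenvalue δ n * t) := by
  set L : ℝ := δ + 4
  set C := gegenbauer (δ / 2 - 1 / 2) n
  set I := ∫ s in (-1 : ℝ)..1, (1 - s ^ 2) ^ (δ / 2 - 1) * (C.eval s) ^ 2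
  have hL0 : 0 ≤ L := by linarith
  have hC : ∀ z ∈ Icc (-1 : ℝ) 1, |C.eval z| ≤ L ^ n ∧ |C.derivative.eval z| ≤ L ^ n := by
    intro z hz
    have := abs_gegenbauer_eval_le (α := δ / 2 - 1 / 2) (by linarith) (abs_le.2 hz) n
    rwa [show 2 * (δ / 2 - 1 / 2) + 5 = L by ring] at this
  have hI : (4 * (4 * L ^ n) ^ (δ / 2))⁻¹ ≤ I := by
    have := inv_le_integral_weight_mul_sq (γ := δ / 2 - 1) (by linarith)
      (one_le_pow₀ (by linarith)) (one_le_gegenbauer_eval_one (by linarith) n)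
      (fun z hz => (hC z hz).2)
    rwa [sub_add_cancel] at this
  have hI0 : 0 < (4 * (4 * L ^ n) ^ (δ / 2))⁻¹ := by positivity
  have hw0 : 0 ≤ 1 - y ^ 2 := by nlinarith [hy.1, hy.2]
  have hw : (1 - y ^ 2) ^ (δ / 2 - 1) ≤ 1 :=
    Real.rpow_le_one hw0 (by nlinarith) (by linarith)
  calc |transDensityTerm δ t x y n|
      = (1 - y ^ 2) ^ (δ / 2 - 1) * |C.eval x| * |C.eval y| / I *
          Real.exp (-gegenbauerEigenvalue δ n * t) := by
        have hexp : -((n : ℝ) / 2) * ((n : ℝ) + δ - 1) * t = -gegenbauerEigenvalue δ n * t := by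
          rw [gegenbauerEigenvalue]; ring
        rw [transDensityTerm, abs_mul, abs_div, abs_mul, abs_mul, abs_of_pos (hI0.trans_le hI),
          abs_of_nonneg (Real.rpow_nonneg hw0 _), Real.abs_exp, hexp]
    _ ≤ 1 * L ^ n * L ^ n / (4 * (4 * L ^ n) ^ (δ / 2))⁻¹ *
          Real.exp (-gegenbauerEigenvalue δ n * t) := by
        gcongr
        exacts [(hC x hx).1, (hC y hy).1]
    _ = _ := by
        rw [Real.mul_rpow (by norm_num) (by positivity), ← Real.rpow_natCast_mul hL0,
          mul_comm (n : ℝ), Real.rpow_mul_natCast hL0]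
        field_simp
        rw [mul_pow, ← pow_mul, ← pow_mul, mul_comm n 2, mul_comm]

end TransDensity

/-- For `δ ≥ 2` there is a constant `C` depending only on `δ` such that
`|p^{(Y)}(t, x, y) − p^{(Y)}(y)| ≤ C e^{−(δ/2)t}` for all `x, y ∈ [−1, 1]` and `t ≥ 1`. -/
theorem transitionDensity_convergence_to_stationary (δ : ℝ) (hδ : 2 ≤ δ) :
    ∃ C : ℝ, ∀ t : ℝ, 1 ≤ t → ∀ x ∈ Icc (-1 : ℝ) 1, ∀ y ∈ Icc (-1 : ℝ) 1,
      |transDensity δ t x y - stationaryDensity δ y| ≤ C * Real.exp (-(δ / 2) * t) := by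
  set c : ℕ → ℝ := fun n => 4 * 4 ^ (δ / 2) * ((δ + 4) ^ (δ / 2) * (δ + 4) ^ 2) ^ n
  have hc : Summable fun n => c n * Real.exp (-gegenbauerEigenvalue δ n) := by
    refine ((summable_pow_mul_exp_neg_gegenbauerEigenvalue δ
      ((δ + 4) ^ (δ / 2) * (δ + 4) ^ 2)).mul_left (4 * 4 ^ (δ / 2))).congr fun n => ?_
    simp only [c]
    ring
  refine ⟨Real.exp (δ / 2) * ∑' n, c (n + 1) * Real.exp (-gegenbauerEigenvalue δ (n + 1)),
    fun t ht x hx y hy => ?_⟩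
  have hterm : ∀ n,
      |transDensityTerm δ t x y n| ≤ c n * Real.exp (-gegenbauerEigenvalue δ n * t) :=
    abs_transDensityTerm_le hδ hx hy
  have hsum : Summable (transDensityTerm δ t x y) :=
    summable_of_abs_le_mul_exp ht (gegenbauerEigenvalue_nonneg (by linarith)) hc hterm
  rw [transDensity_eq_tsum, hsum.tsum_eq_zero_add, transDensityTerm_zero, add_sub_cancel_left]
  have htail := abs_tsum_le_of_abs_le_mul_exp (f := fun n => transDensityTerm δ t x y (n + 1))
    (c := fun n => c (n + 1)) (lam := fun n => gegenbauerEigenvalue δ (n + 1)) ht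
    (gegenbauerEigenvalue_one_le (by linarith)) ((summable_nat_add_iff 1).2 hc)
    (fun n => hterm (n + 1))
  rwa [gegenbauerEigenvalue_one] at htail
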